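/- Packing of the first stopping condition: let W be a d×d matrix weight on J = [0,1) with ⟨W⟩_J invertible, let C₁ > 0, and let {L} be a collection of pairwise disjoint dyadic subintervals of J such that ‖⟨W⟩_L^{1/2} ⟨W⟩_J^{-1/2}‖ > C₁ for every L in the collection (operator norm). Then Σ_L |L| ≤ (d / C₁²) · |J|. In particular, if C₁² ≥ 4d, then Σ_L |L| ≤ |J|/4. -/

import Mathlib

open MeasureTheory Matrix Set ENNReal Filter
open scoped ComplexOrder

noncomputable section

/-- The dyadic interval `[k/2^n, (k+1)/2^n)`. -/
def dyadicI (n k : ℕ) : Set ℝ := Set.Ico ((k : ℝ) / 2 ^ n) (((k : ℝ) + 1) / 2 ^ n)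

/-- `I` is a dyadic subinterval of `J = [0,1)`. -/
def IsDyadic (I : Set ℝ) : Prop := ∃ n k : ℕ, k < 2 ^ n ∧ I = dyadicI n k

/-- The length (Lebesgue measure) of a set, as a real number. -/
def len (I : Set ℝ) : ℝ := (volume I).toReal

/-- The `L²`-normalized Haar function of an interval `I = [a, b)`:
`h_I = |I|^{-1/2} (χ_{I_+} - χ_{I_-})`. -/
def haar (I : Set ℝ) (x : ℝ) : ℝ :=
  (Real.sqrt (len I))⁻¹ *
    ((Set.Ico ((sInf I + sSup I) / 2) (sSup I)).indicator (fun _ => (1 : ℝ)) x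
      - (Set.Ico (sInf I) ((sInf I + sSup I) / 2)).indicator (fun _ => (1 : ℝ)) x)

/-- The Haar coefficient `(f, h_I) = ∫_J f h_I ∈ ℂ^d` of a vector-valued function. -/
def haarCoef {d : ℕ} (f : ℝ → Fin d → ℂ) (I : Set ℝ) : Fin d → ℂ :=
  ∫ x in Set.Ico (0 : ℝ) 1, haar I x • f x

/-- The Euclidean norm on `ℂ^d`. -/
def vnorm {d : ℕ} (v : Fin d → ℂ) : ℝ := Real.sqrt (∑ i, ‖v i‖ ^ 2)

/-- The (real) quadratic form `⟨M v, v⟩` of a matrix. -/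
def qf {d : ℕ} (M : Matrix (Fin d) (Fin d) ℂ) (v : Fin d → ℂ) : ℝ :=
  (star v ⬝ᵥ M.mulVec v).re

/-- The entrywise average `⟨W⟩_I = |I|⁻¹ ∫_I W` of a matrix-valued function. -/
def mavg {d : ℕ} (W : ℝ → Matrix (Fin d) (Fin d) ℂ) (I : Set ℝ) :
    Matrix (Fin d) (Fin d) ℂ :=
  Matrix.of fun i j => (len I : ℂ)⁻¹ * ∫ x in I, W x i j

open scoped Classical in
/-- The positive semidefinite square root of a positive semidefinite matrix
(junk value `0` otherwise). -/
def msqrt {d : ℕ} (M : Matrix (Fin d) (Fin d) ℂ) : Matrix (Fin d) (Fin d) ℂ :=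
  if h : M.PosSemidef then
    (h.1.eigenvectorUnitary : Matrix (Fin d) (Fin d) ℂ) *
      Matrix.diagonal (((↑) : ℝ → ℂ) ∘ Real.sqrt ∘ h.1.eigenvalues) *
      (star h.1.eigenvectorUnitary : Matrix (Fin d) (Fin d) ℂ)
  else 0

/-- The operator norm of a matrix acting on the Euclidean space `ℂ^d`. -/
def opNorm {d : ℕ} (M : Matrix (Fin d) (Fin d) ℂ) : ℝ :=
  ‖Matrix.toEuclideanCLM (𝕜 := ℂ) M‖

/-- A `d × d` matrix weight on `J = [0,1)`: entrywise integrable and a.e. positive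
semidefinite. -/
structure IsMatrixWeight {d : ℕ} (W : ℝ → Matrix (Fin d) (Fin d) ℂ) : Prop where
  integrable : ∀ i j, IntegrableOn (fun x => W x i j) (Set.Ico (0 : ℝ) 1)
  posSemidef : ∀ᵐ x ∂(volume.restrict (Set.Ico (0 : ℝ) 1)), (W x).PosSemidef

/-- Membership `f ∈ L²_{ℂ^d}(W)`: `f` is a.e. strongly measurable on `J = [0,1)` and
`∫_J ⟨W f, f⟩ < ∞`. -/
def MemL2W {d : ℕ} (W : ℝ → Matrix (Fin d) (Fin d) ℂ) (f : ℝ → Fin d → ℂ) : Prop :=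
  AEStronglyMeasurable f (volume.restrict (Set.Ico (0 : ℝ) 1)) ∧
    IntegrableOn (fun x => qf (W x) (f x)) (Set.Ico (0 : ℝ) 1)

/-!
Write `R = ⟨W⟩_J^{-1/2}` and `g(x) = tr(W(x) R²) ≥ 0`, so that `∫_J g = tr(⟨W⟩_J R²) = d`.
For each `L`, bounding the operator norm by the Hilbert–Schmidt norm gives
`C₁² < ‖⟨W⟩_L^{1/2} R‖² ≤ tr(R ⟨W⟩_L R) = |L|⁻¹ ∫_L g`. Summing `C₁² |L| < ∫_L g` over the
disjoint intervals `L ⊆ J` yields `C₁² ∑_L |L| ≤ ∫_J g = d`.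
-/

section MatrixSqrt

variable {d : ℕ} {M : Matrix (Fin d) (Fin d) ℂ}

lemma msqrt_of_posSemidef (hM : M.PosSemidef) :
    msqrt M = (hM.1.eigenvectorUnitary : Matrix (Fin d) (Fin d) ℂ) *
      diagonal (((↑) : ℝ → ℂ) ∘ Real.sqrt ∘ hM.1.eigenvalues) *
      (star hM.1.eigenvectorUnitary : Matrix (Fin d) (Fin d) ℂ) := by
  rw [msqrt, dif_pos hM]

lemma posSemidef_msqrt (hM : M.PosSemidef) : (msqrt M).PosSemidef := by
  rw [msqrt_of_posSemidef hM, star_eq_conjTranspose]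
  refine PosSemidef.mul_mul_conjTranspose_same (posSemidef_diagonal_iff.mpr fun i => ?_) _
  simp [Real.sqrt_nonneg]

lemma msqrt_mul_msqrt (hM : M.PosSemidef) : msqrt M * msqrt M = M := by
  set U : Matrix (Fin d) (Fin d) ℂ := (hM.1.eigenvectorUnitary : Matrix (Fin d) (Fin d) ℂ)
  set D := diagonal (((↑) : ℝ → ℂ) ∘ Real.sqrt ∘ hM.1.eigenvalues)
  have hDD : D * D = diagonal (((↑) : ℝ → ℂ) ∘ hM.1.eigenvalues) := by
    rw [diagonal_mul_diagonal]
    congr 1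
    ext i
    simp [← Complex.ofReal_mul, Real.mul_self_sqrt (hM.eigenvalues_nonneg i)]
  calc msqrt M * msqrt M = U * (D * (star U * U) * D) * star U := by
        simp only [msqrt_of_posSemidef hM, Matrix.mul_assoc, U, D]
    _ = M := by
        rw [Unitary.coe_star_mul_self, Matrix.mul_one, hDD]
        exact hM.1.spectral_theorem.symm

lemma mul_inv_msqrt_mul_inv_msqrt (hM : M.PosSemidef) (hU : IsUnit M) :
    M * ((msqrt M)⁻¹ * (msqrt M)⁻¹) = 1 := by
  rw [← Matrix.mul_inv_rev, msqrt_mul_msqrt hM,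
    Matrix.mul_nonsing_inv _ ((isUnit_iff_isUnit_det M).mp hU)]

end MatrixSqrt

section HilbertSchmidt

variable {𝕜 : Type*} [RCLike 𝕜] {m n : Type*} [Fintype m] [Fintype n]

lemma re_trace_conjTranspose_mul_self (B : Matrix m n 𝕜) :
    RCLike.re (trace (Bᴴ * B)) = ∑ i, ∑ j, ‖B i j‖ ^ 2 := by
  simp only [trace, diag, mul_apply, conjTranspose_apply, map_sum, RCLike.star_def,
    RCLike.conj_mul]
  rw [Finset.sum_comm]
  norm_cast

lemma norm_toEuclideanCLM_apply_sq_le [DecidableEq n] (B : Matrix n n 𝕜)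
    (v : EuclideanSpace 𝕜 n) :
    ‖toEuclideanCLM (𝕜 := 𝕜) B v‖ ^ 2 ≤ (∑ i, ∑ j, ‖B i j‖ ^ 2) * ‖v‖ ^ 2 := by
  have hrow : ∀ i, ‖(B *ᵥ v.ofLp) i‖ ^ 2 ≤ (∑ j, ‖B i j‖ ^ 2) * ∑ j, ‖v.ofLp j‖ ^ 2 := fun i =>
    calc ‖(B *ᵥ v.ofLp) i‖ ^ 2 ≤ (∑ j, ‖B i j‖ * ‖v.ofLp j‖) ^ 2 := by
          gcongr
          simpa only [mulVec, dotProduct, norm_mul] using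
            norm_sum_le Finset.univ fun j => B i j * v.ofLp j
      _ ≤ _ := Finset.sum_mul_sq_le_sq_mul_sq _ _ _
  rw [EuclideanSpace.norm_sq_eq, EuclideanSpace.norm_sq_eq, ofLp_toEuclideanCLM, Finset.sum_mul]
  exact Finset.sum_le_sum fun i _ => hrow i

end HilbertSchmidt

lemma opNorm_sq_le_re_trace_conjTranspose_mul_self {d : ℕ} (B : Matrix (Fin d) (Fin d) ℂ) :
    opNorm B ^ 2 ≤ (trace (Bᴴ * B)).re := by
  have hHS := re_trace_conjTranspose_mul_self B
  have hHS_nonneg : 0 ≤ (trace (Bᴴ * B)).re := by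
    rw [← RCLike.re_to_complex, hHS]; positivity
  refine (Real.le_sqrt (norm_nonneg _) hHS_nonneg).mp <|
    ContinuousLinearMap.opNorm_le_bound _ (Real.sqrt_nonneg _) fun v => ?_
  rw [← sq_le_sq₀ (norm_nonneg _) (by positivity), mul_pow, Real.sq_sqrt hHS_nonneg,
    ← RCLike.re_to_complex, hHS]
  exact norm_toEuclideanCLM_apply_sq_le B v

section Trace

variable {d : ℕ} {M R : Matrix (Fin d) (Fin d) ℂ}

lemma opNorm_msqrt_mul_sq_le (hM : M.PosSemidef) (hR : R.IsHermitian) :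
    opNorm (msqrt M * R) ^ 2 ≤ (trace (M * (R * R))).re := by
  have hS := (posSemidef_msqrt hM).1
  calc opNorm (msqrt M * R) ^ 2 ≤ (trace ((msqrt M * R)ᴴ * (msqrt M * R))).re :=
        opNorm_sq_le_re_trace_conjTranspose_mul_self _
    _ = (trace (M * (R * R))).re := by
        rw [conjTranspose_mul, hR.eq, hS.eq, Matrix.mul_assoc, ← Matrix.mul_assoc (msqrt M),
          msqrt_mul_msqrt hM, trace_mul_comm, Matrix.mul_assoc]

lemma re_trace_mul_mul_self_nonneg (hM : M.PosSemidef) (hR : R.IsHermitian) :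
    0 ≤ (trace (M * (R * R))).re := by
  have h := (hM.mul_mul_conjTranspose_same R).trace_nonneg
  rw [hR.eq, Matrix.mul_assoc, trace_mul_comm, Matrix.mul_assoc] at h
  exact (Complex.nonneg_iff.mp h).1

end Trace

section MatrixAverage

variable {d : ℕ} {W : ℝ → Matrix (Fin d) (Fin d) ℂ} {I : Set ℝ}

lemma sum_mavg_mul (hW : ∀ i j, IntegrableOn (fun x => W x i j) I)
    (c : Fin d → Fin d → ℂ) :
    ∑ i, ∑ j, mavg W I i j * c i j = (len I : ℂ)⁻¹ * ∫ x in I, ∑ i, ∑ j, W x i j * c i j := by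
  have hint : ∀ i j, Integrable (fun x => W x i j * c i j) (volume.restrict I) :=
    fun i j => (hW i j).mul_const _
  simp only [mavg, of_apply, integral_finsetSum _ fun i _ => integrable_finsetSum _ fun j _ =>
    hint i j, integral_finsetSum _ fun j _ => hint _ j, integral_mul_const, Finset.mul_sum,
    mul_assoc]

lemma trace_mavg_mul (hW : ∀ i j, IntegrableOn (fun x => W x i j) I)
    (Q : Matrix (Fin d) (Fin d) ℂ) :
    trace (mavg W I * Q) = (len I : ℂ)⁻¹ * ∫ x in I, trace (W x * Q) := by
  simpa only [trace, diag, mul_apply] using sum_mavg_mul hW fun i j => Q j i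

lemma dotProduct_mavg_mulVec (hW : ∀ i j, IntegrableOn (fun x => W x i j) I)
    (v : Fin d → ℂ) :
    star v ⬝ᵥ mavg W I *ᵥ v = (len I : ℂ)⁻¹ * ∫ x in I, star v ⬝ᵥ W x *ᵥ v := by
  have hform : ∀ M : Matrix (Fin d) (Fin d) ℂ,
      star v ⬝ᵥ M *ᵥ v = ∑ i, ∑ j, M i j * (star v i * v j) := fun M => by
    simp only [dotProduct, mulVec, Finset.mul_sum]
    exact Finset.sum_congr rfl fun i _ => Finset.sum_congr rfl fun j _ => by ring
  simp only [hform]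
  exact sum_mavg_mul hW _

lemma isHermitian_mavg (hW : ∀ᵐ x ∂volume.restrict I, (W x).IsHermitian) :
    (mavg W I).IsHermitian := by
  ext i j
  have hsymm : ∫ x in I, star (W x j i) = ∫ x in I, W x i j :=
    integral_congr_ae (hW.mono fun x hx => congrFun (congrFun hx i) j)
  simp only [conjTranspose_apply, mavg, of_apply, star_mul', star_inv₀, ← hsymm,
    Complex.star_def, Complex.conj_ofReal, integral_conj]

lemma posSemidef_mavg (hW : ∀ i j, IntegrableOn (fun x => W x i j) I)
    (hpsd : ∀ᵐ x ∂volume.restrict I, (W x).PosSemidef) : (mavg W I).PosSemidef := by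
  refine .of_dotProduct_mulVec_nonneg (isHermitian_mavg (hpsd.mono fun x hx => hx.1)) fun v => ?_
  rw [dotProduct_mavg_mulVec hW]
  refine mul_nonneg ?_ (integral_nonneg_of_ae (hpsd.mono fun x hx => hx.dotProduct_mulVec_nonneg v))
  exact_mod_cast inv_nonneg.mpr ENNReal.toReal_nonneg

lemma integrableOn_trace_mul (hW : ∀ i j, IntegrableOn (fun x => W x i j) I)
    (Q : Matrix (Fin d) (Fin d) ℂ) :
    IntegrableOn (fun x => trace (W x * Q)) I := by
  simp only [trace, diag, mul_apply]
  exact integrable_finsetSum _ fun i _ => integrable_finsetSum _ fun j _ => (hW i j).mul_const _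

lemma re_trace_mavg_mul (hW : ∀ i j, IntegrableOn (fun x => W x i j) I)
    (Q : Matrix (Fin d) (Fin d) ℂ) :
    (trace (mavg W I * Q)).re = (len I)⁻¹ * ∫ x in I, (trace (W x * Q)).re := by
  rw [trace_mavg_mul hW, ← Complex.ofReal_inv, Complex.re_ofReal_mul, ← RCLike.re_to_complex,
    ← integral_re (integrableOn_trace_mul hW Q)]
  rfl

end MatrixAverage

lemma ofReal_mul_tsum_measure_le_integral {α : Type*} [MeasurableSpace α] {μ : Measure α}
    {g : α → ℝ} {t : Set α} {L : Set (Set α)} {c : ℝ} (hLc : L.Countable)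
    (hLm : ∀ I ∈ L, MeasurableSet I) (hLt : ∀ I ∈ L, I ⊆ t) (hdisj : L.PairwiseDisjoint id)
    (ht : μ t ≠ ⊤) (hg : IntegrableOn g t μ) (hg0 : 0 ≤ᵐ[μ.restrict t] g) (hc : 0 ≤ c)
    (hcI : ∀ I ∈ L, c * (μ I).toReal ≤ ∫ x in I, g x ∂μ) :
    ENNReal.ofReal c * ∑' I : L, μ I ≤ ENNReal.ofReal (∫ x in t, g x ∂μ) := by
  have hI : ∀ I ∈ L, ENNReal.ofReal c * μ I ≤ ∫⁻ x in I, ENNReal.ofReal (g x) ∂μ := by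
    intro I hI
    rw [← ENNReal.ofReal_toReal (ne_top_of_le_ne_top ht (measure_mono (hLt I hI))),
      ← ENNReal.ofReal_mul hc,
      ← ofReal_integral_eq_lintegral_ofReal (hg.mono_set (hLt I hI))
        (ae_restrict_of_ae_restrict_of_subset (hLt I hI) hg0)]
    exact ENNReal.ofReal_le_ofReal (hcI I hI)
  calc ENNReal.ofReal c * ∑' I : L, μ I
      = ∑' I : L, ENNReal.ofReal c * μ I := ENNReal.tsum_mul_left.symm
    _ ≤ ∑' I : L, ∫⁻ x in I, ENNReal.ofReal (g x) ∂μ :=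
        ENNReal.tsum_le_tsum fun I => hI I I.2
    _ = ∫⁻ x in ⋃ I ∈ L, I, ENNReal.ofReal (g x) ∂μ := (lintegral_biUnion hLc hLm hdisj _).symm
    _ ≤ ∫⁻ x in t, ENNReal.ofReal (g x) ∂μ := lintegral_mono_set (iUnion₂_subset hLt)
    _ = ENNReal.ofReal (∫ x in t, g x ∂μ) := (ofReal_integral_eq_lintegral_ofReal hg hg0).symm

section Dyadic

variable {I : Set ℝ}

lemma IsDyadic.subset_Ico (hI : IsDyadic I) : I ⊆ Ico 0 1 := by
  obtain ⟨n, k, hk, rfl⟩ := hI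
  refine Ico_subset_Ico (by positivity) ((div_le_one (by positivity)).mpr ?_)
  exact_mod_cast Nat.succ_le_of_lt hk

lemma IsDyadic.measurableSet (hI : IsDyadic I) : MeasurableSet I := by
  obtain ⟨n, k, -, rfl⟩ := hI
  exact measurableSet_Ico

lemma IsDyadic.len_pos (hI : IsDyadic I) : 0 < len I := by
  obtain ⟨n, k, -, rfl⟩ := hI
  rw [len, dyadicI, Real.volume_Ico, ENNReal.toReal_ofReal (by rw [sub_nonneg]; gcongr; simp),
    sub_pos]
  gcongr
  simp

lemma countable_setOf_isDyadic : {I : Set ℝ | IsDyadic I}.Countable := by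
  refine (countable_range fun p : ℕ × ℕ => dyadicI p.1 p.2).mono fun I hI => ?_
  obtain ⟨n, k, -, rfl⟩ := hI
  exact ⟨(n, k), rfl⟩

end Dyadic

lemma sq_mul_len_le_integral_re_trace {d : ℕ} {W : ℝ → Matrix (Fin d) (Fin d) ℂ}
    (hW : IsMatrixWeight W) {I : Set ℝ} (hI : IsDyadic I) {R : Matrix (Fin d) (Fin d) ℂ}
    (hR : R.IsHermitian) {C : ℝ} (hC : 0 < C) (hCI : C < opNorm (msqrt (mavg W I) * R)) :
    C ^ 2 * len I ≤ ∫ x in I, (trace (W x * (R * R))).re := by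
  have hint : ∀ i j, IntegrableOn (fun x => W x i j) I :=
    fun i j => (hW.integrable i j).mono_set hI.subset_Ico
  have hpsd := posSemidef_mavg hint (ae_restrict_of_ae_restrict_of_subset hI.subset_Ico
    hW.posSemidef)
  have hlt : C ^ 2 < (len I)⁻¹ * ∫ x in I, (trace (W x * (R * R))).re :=
    calc C ^ 2 < opNorm (msqrt (mavg W I) * R) ^ 2 := by gcongr
      _ ≤ (trace (mavg W I * (R * R))).re := opNorm_msqrt_mul_sq_le hpsd hR
      _ = _ := re_trace_mavg_mul hint _
  rw [lt_inv_mul_iff₀ hI.len_pos, mul_comm] at hlt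
  exact hlt.le

/-- **Packing of the first stopping condition.** If `W` is a matrix weight on `J = [0,1)`
with `⟨W⟩_J` invertible and `{L}` is a collection of pairwise disjoint dyadic subintervals
of `J` with `‖⟨W⟩_L^{1/2} ⟨W⟩_J^{-1/2}‖ > C₁` for each `L`, then
`∑_L |L| ≤ (d / C₁²) |J|`; in particular `∑_L |L| ≤ |J|/4` whenever `C₁² ≥ 4d`. -/
theorem first_stopping_condition_packing (d : ℕ)
    (W : ℝ → Matrix (Fin d) (Fin d) ℂ) (hW : IsMatrixWeight W)
    (hWJ : IsUnit (mavg W (Set.Ico (0 : ℝ) 1)))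
    (C₁ : ℝ) (hC₁ : 0 < C₁)
    (L : Set (Set ℝ)) (hL : ∀ I ∈ L, IsDyadic I) (hdisj : L.PairwiseDisjoint id)
    (hbig : ∀ I ∈ L,
      C₁ < opNorm (msqrt (mavg W I) * (msqrt (mavg W (Set.Ico (0 : ℝ) 1)))⁻¹)) :
    (∑' I : L, volume (I : Set ℝ))
        ≤ ENNReal.ofReal ((d : ℝ) / C₁ ^ 2 * len (Set.Ico (0 : ℝ) 1)) ∧
      (4 * (d : ℝ) ≤ C₁ ^ 2 →
        (∑' I : L, volume (I : Set ℝ)) ≤ volume (Set.Ico (0 : ℝ) 1) / 4) := by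
  set J := Ico (0 : ℝ) 1
  have hAJ := posSemidef_mavg hW.integrable hW.posSemidef
  set R := (msqrt (mavg W J))⁻¹
  have hR : R.IsHermitian := (posSemidef_msqrt hAJ).1.inv
  have hvolJ : volume J = 1 := by simp [J]
  have hlenJ : len J = 1 := by simp [len, hvolJ]
  have hg0 : 0 ≤ᵐ[volume.restrict J] fun x => (trace (W x * (R * R))).re :=
    hW.posSemidef.mono fun x hx => re_trace_mul_mul_self_nonneg hx hR
  have hgJ : ∫ x in J, (trace (W x * (R * R))).re = d := by
    have h := re_trace_mavg_mul hW.integrable (R * R)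
    rw [mul_inv_msqrt_mul_inv_msqrt hAJ hWJ, hlenJ, trace_one] at h
    simpa using h.symm
  have hpack := ofReal_mul_tsum_measure_le_integral (countable_setOf_isDyadic.mono hL)
    (fun I hI => (hL I hI).measurableSet) (fun I hI => (hL I hI).subset_Ico) hdisj (by simp)
    (integrableOn_trace_mul hW.integrable _).re hg0 (sq_nonneg C₁)
    fun I hI => sq_mul_len_le_integral_re_trace hW (hL I hI) hR hC₁ (hbig I hI)
  have hsum : (∑' I : L, volume (I : Set ℝ)) ≤ ENNReal.ofReal (d / C₁ ^ 2) := by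
    rw [ENNReal.ofReal_div_of_pos (by positivity), ENNReal.le_div_iff_mul_le
      (Or.inl (ENNReal.ofReal_pos.mpr (by positivity)).ne') (Or.inl ENNReal.ofReal_ne_top),
      mul_comm, ← hgJ]
    exact hpack
  refine ⟨by rwa [hlenJ, mul_one], fun h4 => hsum.trans ?_⟩
  rw [hvolJ, ← ENNReal.ofReal_one, ← ENNReal.ofReal_ofNat 4,
    ← ENNReal.ofReal_div_of_pos (by norm_num)]
  exact ENNReal.ofReal_le_ofReal
    ((div_le_div_iff₀ (by positivity) (by norm_num)).mpr (by linarith))
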